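/- arXiv:2210.01359 — 6 statements merged into one kernel-verified Lean document; each statement's English description precedes it below -/
import Mathlib

section
/- Define F₂(λ,l) = (G₀ c_B/√λ) · ( (√λ − l)/(√λ + 1) + (l − √(λ + l²))/(√(λ + l²) + √(1 + l²)) ). For every λ > 0, F₂(λ,l) → −∞ as l → +∞. -/
/-! For large `l` the first summand `(√λ - l) / (√λ + 1)` decreases linearly to `-∞`, while the
second is never positive because `l ≤ |l| ≤ √(λ + l²)`; the positive prefactor preserves the
limit. -/

open Filter

theorem tendsto_const_sub_atTop_atBot {G : Type*} [AddCommGroup G] [PartialOrder G]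
    [IsOrderedAddMonoid G] (a : G) : Tendsto (fun x : G => a - x) atTop atBot := by
  simpa only [sub_eq_add_neg] using tendsto_atBot_add_const_left atTop a tendsto_neg_atTop_atBot

theorem sub_sqrt_add_sq_nonpos {a : ℝ} (ha : 0 ≤ a) (l : ℝ) : l - Real.sqrt (a + l ^ 2) ≤ 0 :=
  sub_nonpos.mpr (Real.le_sqrt_of_sq_le (by linarith))

theorem stmt_5 (G₀ c_B lam : ℝ) (hG : 0 < G₀) (hc : 0 < c_B) (hlam : 0 < lam)
    (F₂ : ℝ → ℝ)
    (hF₂ : ∀ l, F₂ l = (G₀ * c_B / Real.sqrt lam) *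
      ((Real.sqrt lam - l) / (Real.sqrt lam + 1) +
       (l - Real.sqrt (lam + l ^ 2)) / (Real.sqrt (lam + l ^ 2) + Real.sqrt (1 + l ^ 2)))) :
    Filter.Tendsto F₂ Filter.atTop Filter.atBot := by
  have hprefactor : 0 < G₀ * c_B / Real.sqrt lam := by positivity
  have hlinear : Tendsto (fun l => (Real.sqrt lam - l) / (Real.sqrt lam + 1)) atTop atBot :=
    (tendsto_const_sub_atTop_atBot _).atBot_div_const (by positivity)
  have hcorrection : ∀ l : ℝ,
      (l - Real.sqrt (lam + l ^ 2)) / (Real.sqrt (lam + l ^ 2) + Real.sqrt (1 + l ^ 2)) ≤ 0 :=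
    fun l => div_nonpos_of_nonpos_of_nonneg (sub_sqrt_add_sq_nonpos hlam.le l) (by positivity)
  rw [funext hF₂]
  exact (hlinear.atBot_add_nonpos hcorrection).const_mul_atBot hprefactor
end

section
/- For every λ with 0 < λ ≤ 1 and every l > 0, F₂(λ,l) < 0, where F₂(λ,l) = (G₀ c_B/√λ) · ( (√λ − l)/(√λ + 1) + (l − √(λ + l²))/(√(λ + l²) + √(1 + l²)) ) with G₀, c_B > 0. -/
theorem stmt_7 (G₀ c_B : ℝ) (hG : 0 < G₀) (hc : 0 < c_B)
    (lam : ℝ) (hlam : 0 < lam) (hlam1 : lam ≤ 1) (l : ℝ) (hl : 0 < l) :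
    (G₀ * c_B / Real.sqrt lam) *
      ((Real.sqrt lam - l) / (Real.sqrt lam + 1) +
       (l - Real.sqrt (lam + l ^ 2)) / (Real.sqrt (lam + l ^ 2) + Real.sqrt (1 + l ^ 2))) < 0 := by
  set s := Real.sqrt lam with hs
  set m := Real.sqrt (lam + l ^ 2) with hm
  set n := Real.sqrt (1 + l ^ 2) with hn
  have hs0 : 0 < s := Real.sqrt_pos.mpr hlam
  have hm0 : 0 < m := Real.sqrt_pos.mpr (by positivity)
  have hn0 : 0 < n := Real.sqrt_pos.mpr (by positivity)
  have hsm : s ≤ m := Real.sqrt_le_sqrt (by nlinarith)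
  have hn1 : 1 < n := by
    have : Real.sqrt 1 < n := Real.sqrt_lt_sqrt (by norm_num) (by nlinarith)
    simpa using this
  have hsn : s * n ≤ m := by
    rw [hs, hn, ← Real.sqrt_mul hlam.le]
    exact Real.sqrt_le_sqrt (by nlinarith)
  have hd1 : (0:ℝ) < s + 1 := by linarith
  have hd2 : (0:ℝ) < m + n := by linarith
  have key : (s - l) / (s + 1) + (l - m) / (m + n) < 0 := by
    rw [div_add_div _ _ (ne_of_gt hd1) (ne_of_gt hd2)]
    apply div_neg_of_neg_of_pos _ (by positivity)
    have hmn : s + 1 < m + n := by linarith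
    nlinarith [mul_pos hl (sub_pos.mpr hmn)]
  have hpre : 0 < G₀ * c_B / s := by positivity
  exact mul_neg_of_pos_of_neg hpre key
end

section
/- Define N(λ,l) = 2λ(√λ+1)(√(λ+l²)+√(1+l²)) · F₂(λ,l)/(G₀ c_B), i.e. N(λ,l) = 2√λ[ (√λ − l)(√(λ+l²) + √(1+l²)) + (l − √(λ+l²))(√λ + 1) ]. For 0 < l < √λ ≤ 1, the partial derivative ∂N/∂l is strictly negative. -/
/-!
With `s = √λ`, `A = √(λ + l²)` and `B = √(1 + l²)`, the derivative is
`∂N/∂l = 2s · [-(A + B) + (s - l)(l/A + l/B) + (1 - l/A)(s + 1)]`.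
Multiplying the bracket by `AB > 0` gives
`(s - A)AB + (1 - B)AB + (s - l)lA - l(l + 1)B`, whose first term is negative
(`s < A`), second nonpositive (`1 ≤ B`), and the last two combine to something negative
because `(s - l)A ≤ (s - l)(s + l) = λ - l² < 1 ≤ (l + 1)B`.
-/

open Real

lemma hasDerivAt_sqrt_add_sq {c x : ℝ} (h : c + x ^ 2 ≠ 0) :
    HasDerivAt (fun y : ℝ => √(c + y ^ 2)) (x / √(c + x ^ 2)) x := by
  have hsq : HasDerivAt (fun y : ℝ => c + y ^ 2) (2 * x) x := by
    simpa using (hasDerivAt_pow 2 x).const_add c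
  exact (hsq.sqrt h).congr_deriv (by ring)

lemma hasDerivAt_travelingWaveNumerator {lam l : ℝ} (hlam : 0 < lam) :
    HasDerivAt
      (fun x => 2 * √lam * ((√lam - x) * (√(lam + x ^ 2) + √(1 + x ^ 2)) +
        (x - √(lam + x ^ 2)) * (√lam + 1)))
      (2 * √lam * (-(√(lam + l ^ 2) + √(1 + l ^ 2)) +
        (√lam - l) * (l / √(lam + l ^ 2) + l / √(1 + l ^ 2)) +
        (1 - l / √(lam + l ^ 2)) * (√lam + 1))) l := by
  have hA := hasDerivAt_sqrt_add_sq (c := lam) (x := l) (by positivity)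
  have hB := hasDerivAt_sqrt_add_sq (c := 1) (x := l) (by positivity)
  have hsub : HasDerivAt (fun x : ℝ => √lam - x) (-1) l := by
    simpa using (hasDerivAt_id l).const_sub √lam
  exact (((hsub.mul (hA.add hB)).add
    (((hasDerivAt_id l).sub hA).mul_const (√lam + 1))).const_mul (2 * √lam)).congr_deriv
    (by simp only [Pi.add_apply]; ring)

lemma travelingWaveNumerator_deriv_factor_neg {s l A B : ℝ} (hs1 : s ≤ 1) (hl : 0 < l)
    (hls : l < s) (hA0 : 0 < A) (hA : A ^ 2 = s ^ 2 + l ^ 2) (hB0 : 0 < B)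
    (hB : B ^ 2 = 1 + l ^ 2) :
    -(A + B) + (s - l) * (l / A + l / B) + (1 - l / A) * (s + 1) < 0 := by
  have hsA : s < A := by nlinarith
  have hAsl : A ≤ s + l := by nlinarith
  have hB1 : 1 ≤ B := by nlinarith
  have hcross : (s - l) * A < (l + 1) * B := calc
    (s - l) * A ≤ (s - l) * (s + l) := mul_le_mul_of_nonneg_left hAsl (by linarith)
    _ < 1 := by nlinarith
    _ ≤ (l + 1) * B := by nlinarith
  have hAB : 0 < A * B := mul_pos hA0 hB0
  have key : (s - A) * (A * B) + (1 - B) * (A * B) + l * ((s - l) * A - (l + 1) * B) < 0 := by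
    have := mul_neg_of_pos_of_neg hl (sub_neg.mpr hcross)
    nlinarith [mul_neg_of_neg_of_pos (sub_neg.mpr hsA) hAB,
      mul_nonpos_of_nonpos_of_nonneg (sub_nonpos.mpr hB1) hAB.le]
  have heq : -(A + B) + (s - l) * (l / A + l / B) + (1 - l / A) * (s + 1) =
      ((s - A) * (A * B) + (1 - B) * (A * B) + l * ((s - l) * A - (l + 1) * B)) / (A * B) := by
    field_simp
    ring
  rw [heq]
  exact div_neg_of_neg_of_pos key hAB

theorem stmt_8 (lam : ℝ) (hlam : 0 < lam) (hlam1 : lam ≤ 1)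
    (N : ℝ → ℝ)
    (hN : ∀ l, N l = 2 * Real.sqrt lam *
      ((Real.sqrt lam - l) * (Real.sqrt (lam + l ^ 2) + Real.sqrt (1 + l ^ 2)) +
       (l - Real.sqrt (lam + l ^ 2)) * (Real.sqrt lam + 1)))
    (l : ℝ) (hl : 0 < l) (hl2 : l < Real.sqrt lam) :
    deriv N l < 0 := by
  rw [(funext hN : N = _), (hasDerivAt_travelingWaveNumerator hlam).deriv]
  have hs1 : √lam ≤ 1 := sqrt_le_one.mpr hlam1
  refine mul_neg_of_pos_of_neg (by positivity) ?_
  refine travelingWaveNumerator_deriv_factor_neg hs1 hl hl2 (by positivity) ?_ (by positivity) ?_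
  · rw [sq_sqrt (by positivity), sq_sqrt hlam.le]
  · rw [sq_sqrt (by positivity)]
end

section
/- For every λ > 1, there exists L > 0 such that F₂(λ,l) > 0 for all l ∈ (0, L), where F₂(λ,l) = (G₀ c_B/√λ) · ( (√λ − l)/(√λ + 1) + (l − √(λ + l²))/(√(λ + l²) + √(1 + l²)) ) and G₀, c_B > 0. -/
set_option maxHeartbeats 1000000 in

lemma stmt_9_aux (s a b l : ℝ) (hs1 : 1 < s) (ha0 : 0 < a) (hb0 : 0 < b)
    (ha2 : a ^ 2 = s ^ 2 + l ^ 2) (hb2 : b ^ 2 = 1 + l ^ 2)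
    (hl0 : 0 < l) (hl1 : l < 1) (hl2 : l * (4 * s) < s ^ 2 - 1) :
    0 < (s - l) * (a + b) + (l - a) * (s + 1) := by
  have hs0 : 0 < s := by linarith
  have has : s < a := by nlinarith
  have hb1 : 1 < b := by nlinarith
  have ha2s : a < 2 * s := by nlinarith
  have hb2' : b < 2 := by nlinarith
  have hsb2 : (s * b) ^ 2 = s ^ 2 + s ^ 2 * l ^ 2 := by
    rw [mul_pow, hb2]; ring
  have hsba : a < s * b := by
    have h1 : a ^ 2 < (s * b) ^ 2 := by
      rw [hsb2]
      nlinarith [mul_pos (show (0:ℝ) < s ^ 2 - 1 by nlinarith) (mul_pos hl0 hl0)]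
    exact lt_of_pow_lt_pow_left₀ 2 (by positivity) h1
  have hsb4 : s * b + a < 4 * s := by nlinarith
  have hA' : l * (a - s) * 2 < l ^ 3 := by
    have hA2 : (a - s) * 2 < l ^ 2 := by
      nlinarith [mul_pos (sub_pos.mpr has) (sub_pos.mpr has),
        mul_pos (sub_pos.mpr has) (sub_pos.mpr hs1)]
    nlinarith [mul_lt_mul_of_pos_left hA2 hl0]
  have hB' : l * (b - 1) * 2 < l ^ 3 := by
    have hB : (b - 1) * 2 < l ^ 2 := by
      nlinarith [mul_pos (sub_pos.mpr hb1) (sub_pos.mpr hb1)]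
    nlinarith [mul_lt_mul_of_pos_left hB hl0]
  have hD : (s * b - a) * (s * b + a) = (s ^ 2 - 1) * l ^ 2 := by
    have h1 : (s * b - a) * (s * b + a) = (s * b) ^ 2 - a ^ 2 := by ring
    rw [h1, hsb2, ha2]; ring
  have hC1 : (s ^ 2 - 1) * l ^ 2 < (s * b - a) * (4 * s) := by
    nlinarith [mul_pos (sub_pos.mpr hsba) (sub_pos.mpr hsb4)]
  have hC2 : 4 * s * l ^ 3 < (s ^ 2 - 1) * l ^ 2 := by
    nlinarith [mul_lt_mul_of_pos_left hl2 (mul_pos hl0 hl0)]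
  have hC : l ^ 3 < s * b - a := by nlinarith
  nlinarith [hC, hA', hB']

theorem stmt_9 (G₀ c_B : ℝ) (hG : 0 < G₀) (hc : 0 < c_B)
    (lam : ℝ) (hlam : 1 < lam) :
    ∃ L > 0, ∀ l ∈ Set.Ioo (0:ℝ) L,
      0 < (G₀ * c_B / Real.sqrt lam) *
        ((Real.sqrt lam - l) / (Real.sqrt lam + 1) +
         (l - Real.sqrt (lam + l ^ 2)) / (Real.sqrt (lam + l ^ 2) + Real.sqrt (1 + l ^ 2))) := by
  have hlam0 : (0:ℝ) < lam := by linarith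
  have hs1 : 1 < Real.sqrt lam := by
    have h := Real.sqrt_lt_sqrt (by norm_num) hlam
    simpa using h
  have hs0 : 0 < Real.sqrt lam := by linarith
  have hs2 : Real.sqrt lam ^ 2 = lam := Real.sq_sqrt (le_of_lt hlam0)
  refine ⟨min 1 ((lam - 1) / (4 * Real.sqrt lam)), lt_min (by norm_num)
    (div_pos (by linarith) (by positivity)), ?_⟩
  intro l hl
  obtain ⟨hl0, hlL⟩ := hl
  have hl1 : l < 1 := lt_of_lt_of_le hlL (min_le_left _ _)
  have hl2 : l < (lam - 1) / (4 * Real.sqrt lam) := lt_of_lt_of_le hlL (min_le_right _ _)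
  have hl2' : l * (4 * Real.sqrt lam) < Real.sqrt lam ^ 2 - 1 := by
    rw [hs2]; exact (lt_div_iff₀ (by positivity)).mp hl2
  have ha2 : Real.sqrt (lam + l ^ 2) ^ 2 = Real.sqrt lam ^ 2 + l ^ 2 := by
    rw [hs2]; exact Real.sq_sqrt (by positivity)
  have hb2 : Real.sqrt (1 + l ^ 2) ^ 2 = 1 + l ^ 2 := Real.sq_sqrt (by positivity)
  have ha0 : 0 < Real.sqrt (lam + l ^ 2) := Real.sqrt_pos.mpr (by positivity)
  have hb0 : 0 < Real.sqrt (1 + l ^ 2) := Real.sqrt_pos.mpr (by positivity)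
  have hN := stmt_9_aux (Real.sqrt lam) (Real.sqrt (lam + l ^ 2)) (Real.sqrt (1 + l ^ 2)) l
    hs1 ha0 hb0 ha2 hb2 hl0 hl1 hl2'
  have hbr : 0 < (Real.sqrt lam - l) / (Real.sqrt lam + 1) +
      (l - Real.sqrt (lam + l ^ 2)) / (Real.sqrt (lam + l ^ 2) + Real.sqrt (1 + l ^ 2)) := by
    rw [div_add_div _ _ (by positivity) (by positivity)]
    exact div_pos (by linarith [hN, mul_comm (Real.sqrt lam + 1) (l - Real.sqrt (lam + l ^ 2))]) (by positivity)
  exact mul_pos (by positivity) hbr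
end

section
/- As l → 0⁺, for fixed λ > 0, N(λ,l) := (√λ − l)(√(λ+l²) + √(1+l²)) + (l − √(λ+l²))(√λ + 1) satisfies N(λ,l) = ((λ−1)/(2√λ)) l² + O(l³). -/
/-!
Write `a = √λ`, `b = √(1 + l²)`, `c = √(a² + l²)`. Then `N(λ, l) - (λ - 1)/(2a) · l²` equals
`a (b - 1 - l²/2) - (c - a - l²/(2a)) - l (c - a) - l (b - 1)`,
and for `a > 0` the expansion `√(a² + x²) = a + x²/(2a) - x⁴/(2a (a + √(a² + x²))²)` shows that
the first two terms are `O(l⁴)` and the last two are `l · O(l²)`.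
-/

open Filter Asymptotics Topology

namespace Real

variable {a : ℝ}

lemma sqrt_sq_add_sq_sub_eq (ha : 0 < a) (x : ℝ) :
    √(a ^ 2 + x ^ 2) - a = x ^ 2 / (a + √(a ^ 2 + x ^ 2)) := by
  have hc : √(a ^ 2 + x ^ 2) ^ 2 = a ^ 2 + x ^ 2 := sq_sqrt (by positivity)
  rw [eq_div_iff (by positivity)]
  linear_combination hc

lemma sqrt_sq_add_sq_sub_sub_eq (ha : 0 < a) (x : ℝ) :
    √(a ^ 2 + x ^ 2) - a - x ^ 2 / (2 * a) = -x ^ 4 / (2 * a * (a + √(a ^ 2 + x ^ 2)) ^ 2) := by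
  have hc : √(a ^ 2 + x ^ 2) ^ 2 = a ^ 2 + x ^ 2 := sq_sqrt (by positivity)
  have hpos : 0 < a + √(a ^ 2 + x ^ 2) := by positivity
  field_simp
  linear_combination (2 * a ^ 2 + 2 * a * √(a ^ 2 + x ^ 2) - x ^ 2) * hc

lemma isBigO_sqrt_sq_add_sq_sub (ha : 0 < a) (l : Filter ℝ) :
    (fun x => √(a ^ 2 + x ^ 2) - a) =O[l] fun x => x ^ 2 := by
  refine IsBigO.of_bound a⁻¹ (Eventually.of_forall fun x => ?_)
  have hsqrt : 0 ≤ √(a ^ 2 + x ^ 2) := sqrt_nonneg _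
  have hpos : 0 < a + √(a ^ 2 + x ^ 2) := by positivity
  rw [sqrt_sq_add_sq_sub_eq ha, norm_div, norm_pow, norm_of_nonneg hpos.le,
    div_eq_inv_mul]
  gcongr
  linarith

lemma isBigO_sqrt_sq_add_sq_sub_sub (ha : 0 < a) (l : Filter ℝ) :
    (fun x => √(a ^ 2 + x ^ 2) - a - x ^ 2 / (2 * a)) =O[l] fun x => x ^ 4 := by
  refine IsBigO.of_bound (2 * a * a ^ 2)⁻¹ (Eventually.of_forall fun x => ?_)
  have hsqrt : 0 ≤ √(a ^ 2 + x ^ 2) := sqrt_nonneg _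
  have hpos : 0 < 2 * a * (a + √(a ^ 2 + x ^ 2)) ^ 2 := by positivity
  rw [sqrt_sq_add_sq_sub_sub_eq ha, norm_div, norm_neg, norm_pow, norm_of_nonneg hpos.le, div_eq_inv_mul]
  gcongr
  linarith

end Real

lemma isBigO_pow_four_pow_three_nhdsGT :
    (fun l : ℝ => l ^ 4) =O[𝓝[>] 0] fun l => l ^ 3 :=
  ((isLittleO_pow_pow (by norm_num : 3 < 4)).isBigO).mono nhdsWithin_le_nhds

lemma Asymptotics.IsBigO.id_mul_sq {f : ℝ → ℝ} {l : Filter ℝ} (h : f =O[l] fun x => x ^ 2) :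
    (fun x => x * f x) =O[l] fun x => x ^ 3 :=
  ((isBigO_refl id l).mul h).congr_right fun x => by simp only [id]; ring

theorem stmt_10 (lam : ℝ) (hlam : 0 < lam) :
    (fun l : ℝ =>
        ((Real.sqrt lam - l) * (Real.sqrt (lam + l ^ 2) + Real.sqrt (1 + l ^ 2)) +
          (l - Real.sqrt (lam + l ^ 2)) * (Real.sqrt lam + 1)) -
        ((lam - 1) / (2 * Real.sqrt lam)) * l ^ 2)
      =O[nhdsWithin 0 (Set.Ioi 0)] fun l : ℝ => l ^ 3 := by
  obtain ⟨a, ha, rfl⟩ : ∃ a, 0 < a ∧ lam = a ^ 2 := ⟨√lam, Real.sqrt_pos.mpr hlam,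
    (Real.sq_sqrt hlam.le).symm⟩
  have hb := Real.isBigO_sqrt_sq_add_sq_sub one_pos (𝓝[>] 0)
  have hb' := Real.isBigO_sqrt_sq_add_sq_sub_sub one_pos (𝓝[>] 0)
  have hc := Real.isBigO_sqrt_sq_add_sq_sub ha (𝓝[>] 0)
  have hc' := Real.isBigO_sqrt_sq_add_sq_sub_sub ha (𝓝[>] 0)
  simp only [one_pow, mul_one] at hb hb'
  have hsum := ((((hb'.const_mul_left a).sub hc').trans isBigO_pow_four_pow_three_nhdsGT).sub
    hc.id_mul_sq).sub hb.id_mul_sq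
  refine hsum.congr_left fun l => ?_
  rw [Real.sqrt_sq ha.le]
  field_simp
  ring
end

section
/- For every integer l ≥ 1 and all λ, R > 0, F₃(λ,l,R) := (G₀ c_B I₁(√λ R)/I₀(√λ R)) · ( I₁'(√λ R)/I₁(√λ R) − I_l'(√λ R)/I_l(√λ R) ) is nonpositive, and strictly negative for l ≥ 2; in particular F₃(λ,1,R) = 0. -/
open MeasureTheory Real

/-- Modified Bessel function of the first kind of integer order `n`,
via the standard integral representation. -/
noncomputable def besselI (n : ℕ) (r : ℝ) : ℝ :=
  (1 / π) * ∫ θ in (0:ℝ)..π, Real.exp (r * Real.cos θ) * Real.cos (n * θ)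

/-- Modified Bessel function of the second kind of integer order `n`,
via the standard integral representation. -/
noncomputable def besselK (n : ℕ) (r : ℝ) : ℝ :=
  ∫ t in Set.Ioi (0:ℝ), Real.exp (-r * Real.cosh t) * Real.cosh (n * t)


/-! With `I_n(r) = π⁻¹ ∫₀^π e^{r cos θ} cos nθ dθ`, differentiating under the integral sign and
integrating by parts give the lowering relation `r I_{n+1}' = r I_n - (n+1) I_{n+1}` and the
modified Bessel equation `r² I_n'' + r I_n' = (r² + n²) I_n`. The first says
`(r^{n+1} I_{n+1})' = r^{n+1} I_n`, so by induction every `I_n` is positive on `(0, ∞)`. The second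
shows that `W = r (I_m I_n' - I_m' I_n)` satisfies `r W' = (n² - m²) I_m I_n`; as `W(0) = 0`, for
`m < n` it is positive on `(0, ∞)`, i.e. `I_m'/I_m < I_n'/I_n`. For `m = 1 < n = l` this is the
sign of `F₃`. -/

open intervalIntegral Set

noncomputable def expCosIntegral (w : ℝ → ℝ) (r : ℝ) : ℝ :=
  ∫ θ in (0:ℝ)..π, exp (r * cos θ) * w θ

theorem hasDerivAt_expCosIntegral {w : ℝ → ℝ} (hw : Continuous w) (r : ℝ) :
    HasDerivAt (expCosIntegral w) (expCosIntegral (fun θ => cos θ * w θ) r) r := by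
  have hbound : ∀ θ, ∀ s ∈ Metric.ball r 1,
      ‖exp (s * cos θ) * (cos θ * w θ)‖ ≤ exp (|r| + 1) * |w θ| := by
    intro θ s hs
    have hs' : |s| ≤ |r| + 1 := by
      have := abs_sub_abs_le_abs_sub s r
      rw [Metric.mem_ball, Real.dist_eq] at hs
      linarith
    have hcos := abs_cos_le_one θ
    have hexp : exp (s * cos θ) ≤ exp (|r| + 1) := exp_le_exp.2 <| calc
      s * cos θ ≤ |s| * |cos θ| := (le_abs_self _).trans (abs_mul _ _).le
      _ ≤ |r| + 1 := by nlinarith [abs_nonneg s]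
    calc ‖exp (s * cos θ) * (cos θ * w θ)‖ = exp (s * cos θ) * (|cos θ| * |w θ|) := by
          rw [norm_mul, norm_mul, Real.norm_eq_abs, Real.norm_eq_abs, Real.norm_eq_abs, abs_exp]
      _ ≤ exp (|r| + 1) * (1 * |w θ|) := by gcongr
      _ = exp (|r| + 1) * |w θ| := by rw [one_mul]
  refine (hasDerivAt_integral_of_dominated_loc_of_deriv_le
    (F' := fun s θ => exp (s * cos θ) * (cos θ * w θ)) (Metric.ball_mem_nhds r one_pos)
    (Filter.Eventually.of_forall fun s => (by fun_prop : Continuous _).aestronglyMeasurable)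
    ((by fun_prop : Continuous _).intervalIntegrable _ _)
    (by fun_prop : Continuous _).aestronglyMeasurable
    (ae_of_all _ fun θ _ => hbound θ)
    ((by fun_prop : Continuous fun θ => exp (|r| + 1) * |w θ|).intervalIntegrable _ _)
    (ae_of_all _ fun θ _ s _ => ?_)).2
  simpa [mul_comm, mul_left_comm, mul_assoc] using
    (((hasDerivAt_id s).mul_const (cos θ)).exp).mul_const (w θ)

section expCosIntegral

variable {f g : ℝ → ℝ} (r : ℝ)

theorem expCosIntegral_add (hf : Continuous f) (hg : Continuous g) :
    expCosIntegral (fun θ => f θ + g θ) r = expCosIntegral f r + expCosIntegral g r := by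
  simp only [expCosIntegral, mul_add]
  exact integral_add ((by fun_prop : Continuous _).intervalIntegrable _ _)
    ((by fun_prop : Continuous _).intervalIntegrable _ _)

theorem expCosIntegral_sub (hf : Continuous f) (hg : Continuous g) :
    expCosIntegral (fun θ => f θ - g θ) r = expCosIntegral f r - expCosIntegral g r := by
  simp only [expCosIntegral, mul_sub]
  exact integral_sub ((by fun_prop : Continuous _).intervalIntegrable _ _)
    ((by fun_prop : Continuous _).intervalIntegrable _ _)

theorem expCosIntegral_const_mul (c : ℝ) :
    expCosIntegral (fun θ => c * f θ) r = c * expCosIntegral f r := by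
  simp only [expCosIntegral, mul_left_comm _ c, intervalIntegral.integral_const_mul]

theorem expCosIntegral_deriv_sub_eq_zero {h h' : ℝ → ℝ} (hh : ∀ θ, HasDerivAt h (h' θ) θ)
    (hh' : Continuous h') (h0 : h 0 = 0) (hπ : h π = 0) :
    expCosIntegral (fun θ => h' θ - r * (sin θ * h θ)) r = 0 := by
  have hh_cont : Continuous h := continuous_iff_continuousAt.2 fun θ => (hh θ).continuousAt
  have hΦ : ∀ θ ∈ uIcc 0 π, HasDerivAt (fun θ => exp (r * cos θ) * h θ)
      (exp (r * cos θ) * (h' θ - r * (sin θ * h θ))) θ := fun θ _ => by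
    refine ((((hasDerivAt_cos θ).const_mul r).exp).mul (hh θ)).congr_deriv ?_
    ring
  rw [expCosIntegral,
    integral_eq_sub_of_hasDerivAt hΦ ((by fun_prop : Continuous _).intervalIntegrable _ _)]
  simp [h0, hπ]

end expCosIntegral

theorem besselI_eq_expCosIntegral (n : ℕ) (r : ℝ) :
    besselI n r = 1 / π * expCosIntegral (fun θ => cos (n * θ)) r := rfl

theorem hasDerivAt_besselI (n : ℕ) (r : ℝ) :
    HasDerivAt (besselI n) (1 / π * expCosIntegral (fun θ => cos θ * cos (n * θ)) r) r :=
  (hasDerivAt_expCosIntegral (by fun_prop) r).const_mul _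

theorem deriv_besselI (n : ℕ) :
    deriv (besselI n) = fun r => 1 / π * expCosIntegral (fun θ => cos θ * cos (n * θ)) r :=
  funext fun r => (hasDerivAt_besselI n r).deriv

theorem hasDerivAt_deriv_besselI (n : ℕ) (r : ℝ) :
    HasDerivAt (deriv (besselI n))
      (1 / π * expCosIntegral (fun θ => cos θ * (cos θ * cos (n * θ))) r) r := by
  rw [deriv_besselI]
  exact (hasDerivAt_expCosIntegral (by fun_prop) r).const_mul _

theorem differentiable_besselI (n : ℕ) : Differentiable ℝ (besselI n) :=
  fun r => (hasDerivAt_besselI n r).differentiableAt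

theorem differentiable_deriv_besselI (n : ℕ) : Differentiable ℝ (deriv (besselI n)) :=
  fun r => (hasDerivAt_deriv_besselI n r).differentiableAt

theorem mul_deriv_besselI_succ (n : ℕ) (r : ℝ) :
    r * deriv (besselI (n + 1)) r = r * besselI n r - (n + 1) * besselI (n + 1) r := by
  have hibp := expCosIntegral_deriv_sub_eq_zero r (h := fun θ => sin ((n + 1 : ℕ) * θ))
    (h' := fun θ => ((n + 1 : ℕ) : ℝ) * cos ((n + 1 : ℕ) * θ))
    (fun θ => ((hasDerivAt_id θ).const_mul _).sin.congr_deriv (by simp [mul_comm]))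
    (by fun_prop) (by simp) (by simpa using sin_nat_mul_pi (n + 1))
  have htrig : ∀ θ : ℝ,
      ((n + 1 : ℕ) : ℝ) * cos ((n + 1 : ℕ) * θ) - r * (sin θ * sin ((n + 1 : ℕ) * θ))
        = (n + 1) * cos ((n + 1 : ℕ) * θ) - r * cos (n * θ)
          + r * (cos θ * cos ((n + 1 : ℕ) * θ)) := by
    intro θ
    have : (n : ℝ) * θ = (n + 1 : ℕ) * θ - θ := by push_cast; ring
    rw [this, cos_sub]
    push_cast
    ring
  simp only [htrig] at hibp
  rw [expCosIntegral_add _ (by fun_prop) (by fun_prop),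
    expCosIntegral_sub _ (by fun_prop) (by fun_prop),
    expCosIntegral_const_mul, expCosIntegral_const_mul, expCosIntegral_const_mul] at hibp
  rw [deriv_besselI, besselI_eq_expCosIntegral, besselI_eq_expCosIntegral]
  push_cast at hibp ⊢
  linear_combination (1 / π) * hibp

-- Green's identity on `[0, π]` for `e^{r cos θ}` and `cos nθ`; the boundary terms vanish.
theorem besselI_ode (n : ℕ) (r : ℝ) :
    r ^ 2 * deriv (deriv (besselI n)) r + r * deriv (besselI n) r
      = (r ^ 2 + n ^ 2) * besselI n r := by
  have hibp := expCosIntegral_deriv_sub_eq_zero r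
    (h := fun θ => r * sin θ * cos (n * θ) - n * sin (n * θ))
    (h' := fun θ =>
      r * (cos θ * cos (n * θ) - n * (sin θ * sin (n * θ))) - n * (n * cos (n * θ)))
    (fun θ => by
      have hc := ((hasDerivAt_id θ).const_mul (n : ℝ)).cos
      have hs := ((hasDerivAt_id θ).const_mul (n : ℝ)).sin
      refine ((((hasDerivAt_sin θ).const_mul r).mul hc).sub (hs.const_mul (n : ℝ))).congr_deriv ?_
      simp only [id, mul_one]
      ring)
    (by fun_prop) (by simp) (by simp [sin_nat_mul_pi])
  have hode : ∀ θ : ℝ,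
      r * (cos θ * cos (n * θ) - n * (sin θ * sin (n * θ))) - n * (n * cos (n * θ))
        - r * (sin θ * (r * sin θ * cos (n * θ) - n * sin (n * θ)))
      = r ^ 2 * (cos θ * (cos θ * cos (n * θ))) + r * (cos θ * cos (n * θ))
        - (r ^ 2 + n ^ 2) * cos (n * θ) := fun θ => by
    linear_combination (-(r ^ 2) * cos (n * θ)) * sin_sq_add_cos_sq θ
  simp only [hode] at hibp
  rw [expCosIntegral_sub _ (by fun_prop) (by fun_prop),
    expCosIntegral_add _ (by fun_prop) (by fun_prop),
    expCosIntegral_const_mul, expCosIntegral_const_mul, expCosIntegral_const_mul] at hibp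
  rw [(hasDerivAt_deriv_besselI n r).deriv, deriv_besselI, besselI_eq_expCosIntegral]
  linear_combination (1 / π) * hibp

theorem pos_of_hasDerivAt_pos {f f' : ℝ → ℝ} {x : ℝ} (hf : ∀ s, HasDerivAt f (f' s) s)
    (hf' : ∀ s ∈ Ioo 0 x, 0 < f' s) (h0 : f 0 = 0) (hx : 0 < x) : 0 < f x := by
  have hmono : StrictMonoOn f (Icc 0 x) :=
    strictMonoOn_of_deriv_pos (convex_Icc 0 x)
      (fun s _ => (hf s).continuousAt.continuousWithinAt)
      (fun s hs => by rw [(hf s).deriv]; exact hf' s (by simpa using hs))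
  simpa [h0] using hmono (left_mem_Icc.2 hx.le) (right_mem_Icc.2 hx.le) hx

theorem besselI_zero_pos (r : ℝ) : 0 < besselI 0 r := by
  rw [besselI_eq_expCosIntegral, expCosIntegral]
  refine mul_pos (by positivity) (intervalIntegral_pos_of_pos_on
    ((by fun_prop : Continuous _).intervalIntegrable _ _) (fun θ _ => ?_) pi_pos)
  simpa using exp_pos _

theorem besselI_pos (n : ℕ) {r : ℝ} (hr : 0 < r) : 0 < besselI n r := by
  induction n generalizing r with
  | zero => exact besselI_zero_pos r
  | succ n ih =>
    have hderiv : ∀ s, HasDerivAt (fun s => s ^ (n + 1) * besselI (n + 1) s)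
        (s ^ (n + 1) * besselI n s) s := fun s =>
      ((hasDerivAt_pow (n + 1) s).mul (differentiable_besselI (n + 1) s).hasDerivAt).congr_deriv
        (by push_cast; linear_combination s ^ n * mul_deriv_besselI_succ n s)
    have := pos_of_hasDerivAt_pos hderiv (fun s hs => mul_pos (pow_pos hs.1 _) (ih hs.1))
      (by simp) hr
    exact pos_of_mul_pos_right this (pow_pos hr _).le

theorem deriv_besselI_mul_besselI_lt {m n : ℕ} (hmn : m < n) {x : ℝ} (hx : 0 < x) :
    deriv (besselI m) x * besselI n x < besselI m x * deriv (besselI n) x := by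
  set I := besselI
  set W : ℝ → ℝ := fun s => s * (I m s * deriv (I n) s - deriv (I m) s * I n s)
  have hd : ∀ k s, HasDerivAt (I k) (deriv (I k) s) s :=
    fun k s => (differentiable_besselI k s).hasDerivAt
  have hdd : ∀ k s, HasDerivAt (deriv (I k)) (deriv (deriv (I k)) s) s :=
    fun k s => (differentiable_deriv_besselI k s).hasDerivAt
  have hW : ∀ s, HasDerivAt W ((I m s * deriv (I n) s - deriv (I m) s * I n s)
      + s * (I m s * deriv (deriv (I n)) s - deriv (deriv (I m)) s * I n s)) s := fun s =>
    ((hasDerivAt_id s).mul (((hd m s).mul (hdd n s)).sub ((hdd m s).mul (hd n s)))).congr_deriv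
      (by simp only [id, Pi.mul_apply, Pi.sub_apply]; ring)
  have hW' : ∀ s ∈ Ioo 0 x, 0 < (I m s * deriv (I n) s - deriv (I m) s * I n s)
      + s * (I m s * deriv (deriv (I n)) s - deriv (deriv (I m)) s * I n s) := by
    rintro s ⟨hs, -⟩
    have hmn2 : (m : ℝ) ^ 2 < n ^ 2 := by gcongr
    refine pos_of_mul_pos_right ?_ hs.le
    have key : s * ((I m s * deriv (I n) s - deriv (I m) s * I n s)
        + s * (I m s * deriv (deriv (I n)) s - deriv (deriv (I m)) s * I n s))
        = (n ^ 2 - m ^ 2) * (I m s * I n s) := by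
      linear_combination I m s * besselI_ode n s - I n s * besselI_ode m s
    rw [key]
    exact mul_pos (by linarith) (mul_pos (besselI_pos m hs) (besselI_pos n hs))
  have := pos_of_hasDerivAt_pos hW hW' (by simp [W]) hx
  nlinarith [pos_of_mul_pos_right this hx.le]

theorem logDeriv_besselI_lt {m n : ℕ} (hmn : m < n) {x : ℝ} (hx : 0 < x) :
    logDeriv (besselI m) x < logDeriv (besselI n) x := by
  rw [logDeriv_apply, logDeriv_apply, div_lt_div_iff₀ (besselI_pos m hx) (besselI_pos n hx)]
  linarith [deriv_besselI_mul_besselI_lt hmn hx]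

theorem stmt_15 (G₀ c_B : ℝ) (hG : 0 < G₀) (hc : 0 < c_B)
    (l : ℕ) (hl : 1 ≤ l) (lam R : ℝ) (hlam : 0 < lam) (hR : 0 < R)
    (F₃ : ℝ)
    (hF₃ : F₃ = (G₀ * c_B * besselI 1 (Real.sqrt lam * R) / besselI 0 (Real.sqrt lam * R)) *
      (deriv (besselI 1) (Real.sqrt lam * R) / besselI 1 (Real.sqrt lam * R) -
       deriv (besselI l) (Real.sqrt lam * R) / besselI l (Real.sqrt lam * R))) :
    F₃ ≤ 0 ∧ (2 ≤ l → F₃ < 0) ∧ (l = 1 → F₃ = 0) := by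
  have hx : 0 < √lam * R := by positivity
  have hC : 0 < G₀ * c_B * besselI 1 (√lam * R) / besselI 0 (√lam * R) := by
    have := besselI_pos 1 hx
    have := besselI_pos 0 hx
    positivity
  have hneg (h : 2 ≤ l) : F₃ < 0 :=
    hF₃ ▸ mul_neg_of_pos_of_neg hC (sub_neg.2 (logDeriv_besselI_lt (by omega) hx))
  have hzero (h : l = 1) : F₃ = 0 := by simp [hF₃, h]
  refine ⟨?_, hneg, hzero⟩
  rcases hl.eq_or_lt with h | h
  · exact (hzero h.symm).le
  · exact (hneg h).le
end
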